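/- Let n ≥ 1, let U be a skew-Hermitian n×n complex matrix, let x be a nonzero real number, and for z ∈ ℂⁿ define E_z := { (k(U + (i x/2)·zz*)k*, x·k z) : k ∈ U(n) } ⊆ M_n(ℂ)×ℂⁿ. Then for all z, w ∈ ℂⁿ: E_z = E_w if and only if there exists h ∈ U(n) with h U h* = U and w = h z. (Key lemma in the proof of Proposition 1.) -/

import Mathlib

open Matrix Complex Finset

/-- The outer matrix `z w*` with `(l,j)` entry `z l * conj (w j)`. -/
noncomputable def outerMat {n : ℕ} (z w : Fin n → ℂ) : Matrix (Fin n) (Fin n) ℂ :=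
  Matrix.of fun l j => z l * (starRingEnd ℂ) (w j)

/-- The set `E_z = { (k (U + (i x/2) z z*) k*, x k z) : k ∈ U(n) }`. -/
noncomputable def Eset {n : ℕ} (U : Matrix (Fin n) (Fin n) ℂ) (x : ℝ) (z : Fin n → ℂ) :
    Set (Matrix (Fin n) (Fin n) ℂ × (Fin n → ℂ)) :=
  {p | ∃ k : Matrix.unitaryGroup (Fin n) ℂ,
    p = ((k : Matrix (Fin n) (Fin n) ℂ) *
          (U + ((Complex.I * (x : ℂ)) / 2) • outerMat z z) *
          star (k : Matrix (Fin n) (Fin n) ℂ),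
        (x : ℂ) • (k : Matrix (Fin n) (Fin n) ℂ).mulVec z)}

/-!
`E_z` is the orbit of `(U + (i x/2) z z*, x z)` under the action `k • (A, v) = (k A k*, k v)` of
`U(n)`, and two orbits agree iff one base point is carried to the other. Since `x ≠ 0`, `h` carries
the base point of `z` to that of `w` iff `w = h z` and, after cancelling `(i x/2) w w*`, `h U h* = U`.
-/

lemma outerMat_eq_vecMulVec {n : ℕ} (z w : Fin n → ℂ) : outerMat z w = vecMulVec z (star w) :=
  rfl

lemma mul_outerMat_mul_star {n : ℕ} (M : Matrix (Fin n) (Fin n) ℂ) (z w : Fin n → ℂ) :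
    M * outerMat z w * star M = outerMat (M *ᵥ z) (M *ᵥ w) := by
  simp only [outerMat_eq_vecMulVec, mul_vecMulVec, vecMulVec_mul, star_mulVec,
    star_eq_conjTranspose]

section UnitaryConj

variable {m α : Type*} [Fintype m] [DecidableEq m] [CommRing α] [StarRing α]

def unitaryConj (k : unitaryGroup m α) (p : Matrix m m α × (m → α)) : Matrix m m α × (m → α) :=
  ((k : Matrix m m α) * p.1 * star (k : Matrix m m α), (k : Matrix m m α) *ᵥ p.2)

lemma unitaryConj_one (p : Matrix m m α × (m → α)) : unitaryConj 1 p = p := by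
  simp [unitaryConj]

lemma unitaryConj_mul (k l : unitaryGroup m α) (p : Matrix m m α × (m → α)) :
    unitaryConj (k * l) p = unitaryConj k (unitaryConj l p) := by
  simp only [unitaryConj, Submonoid.coe_mul, star_mul, mulVec_mulVec, Matrix.mul_assoc]

lemma range_unitaryConj_unitaryConj (h : unitaryGroup m α) (p : Matrix m m α × (m → α)) :
    Set.range (fun k => unitaryConj k (unitaryConj h p)) = Set.range (unitaryConj · p) := by
  simp_rw [← unitaryConj_mul]
  exact (mul_right_surjective h).range_comp (unitaryConj · p)

lemma range_unitaryConj_eq_iff (p q : Matrix m m α × (m → α)) :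
    Set.range (unitaryConj · p) = Set.range (unitaryConj · q) ↔ ∃ h, unitaryConj h p = q := by
  constructor
  · intro hpq
    have hq : q ∈ Set.range (unitaryConj · q) := ⟨1, unitaryConj_one q⟩
    rwa [← hpq] at hq
  · rintro ⟨h, rfl⟩
    exact (range_unitaryConj_unitaryConj h p).symm

end UnitaryConj

lemma Eset_eq_range {n : ℕ} (U : Matrix (Fin n) (Fin n) ℂ) (x : ℝ) (z : Fin n → ℂ) :
    Eset U x z =
      Set.range (unitaryConj · (U + ((Complex.I * (x : ℂ)) / 2) • outerMat z z, (x : ℂ) • z)) := by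
  ext p
  simp only [Eset, Set.mem_ofPred_eq, Set.mem_range, unitaryConj, mulVec_smul, eq_comm]

lemma unitaryConj_eq_iff {n : ℕ} (U : Matrix (Fin n) (Fin n) ℂ) (c : ℂ) {a : ℂ} (ha : a ≠ 0)
    (z w : Fin n → ℂ) (h : unitaryGroup (Fin n) ℂ) :
    unitaryConj h (U + c • outerMat z z, a • z) = (U + c • outerMat w w, a • w) ↔
      (h : Matrix (Fin n) (Fin n) ℂ) * U * star (h : Matrix (Fin n) (Fin n) ℂ) = U ∧
        w = (h : Matrix (Fin n) (Fin n) ℂ) *ᵥ z := by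
  rw [unitaryConj, Matrix.mul_add, Matrix.add_mul, Matrix.mul_smul, Matrix.smul_mul,
    mul_outerMat_mul_star, mulVec_smul, Prod.ext_iff, (smul_right_injective _ ha).eq_iff,
    eq_comm (b := w)]
  constructor
  · rintro ⟨hU, rfl⟩
    exact ⟨add_right_cancel hU, rfl⟩
  · rintro ⟨hU, rfl⟩
    exact ⟨by rw [hU], rfl⟩

theorem Eset_eq_iff_general {n : ℕ}
    (U : Matrix (Fin n) (Fin n) ℂ) (x : ℝ) (hx : x ≠ 0)
    (z w : Fin n → ℂ) :
    Eset U x z = Eset U x w ↔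
      ∃ h : Matrix.unitaryGroup (Fin n) ℂ,
        (h : Matrix (Fin n) (Fin n) ℂ) * U * star (h : Matrix (Fin n) (Fin n) ℂ) = U ∧
        w = (h : Matrix (Fin n) (Fin n) ℂ).mulVec z := by
  rw [Eset_eq_range, Eset_eq_range, range_unitaryConj_eq_iff]
  exact exists_congr (unitaryConj_eq_iff U _ (by exact_mod_cast hx) z w)

/-- key lemma of Proposition 1: `E_z = E_w` iff `w = h z` for some
`h ∈ U(n)` stabilizing `U`. -/
theorem Eset_eq_iff {n : ℕ} (hn : 1 ≤ n)
    (U : Matrix (Fin n) (Fin n) ℂ) (hU : Uᴴ = -U) (x : ℝ) (hx : x ≠ 0)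
    (z w : Fin n → ℂ) :
    Eset U x z = Eset U x w ↔
      ∃ h : Matrix.unitaryGroup (Fin n) ℂ,
        (h : Matrix (Fin n) (Fin n) ℂ) * U * star (h : Matrix (Fin n) (Fin n) ℂ) = U ∧
        w = (h : Matrix (Fin n) (Fin n) ℂ).mulVec z :=
  Eset_eq_iff_general U x hx z w
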